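/- For every odd integer r = 2m+1 ≥ 3 and every integer j with 0 ≤ j ≤ m−1, the real number (−1)^j · ({m}³/{1}) · ( ∏_{k=1}^{j} {m+k}·{m−k} )³ · ({j}!/{2j+1}!)² is strictly positive. Consequently, all summands in Habiro's formula J(r) = Σ_{j=0}^{m−1} (−1)^j ({m}³/{1}) (∏_{k=1}^{j} {m+k}{m−k})³ ({j}!/{2j+1}!)² for the value at t = e^{4πi/r} of the colored Jones polynomial of the Borromean rings with all components colored by m have the same sign, and |J(r)| equals the sum of the absolute values of its summands. -/

import Mathlib

/-!
For `r = 2m + 1`, the number `{n} = 2 sin(2πn/r)` is positive for `0 < n < r/2` and negative for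
`r/2 < n < r`. In the `j`-th summand, `{m}` and `{1}` are positive, each factor `{m+k}{m-k}` with
`1 ≤ k ≤ j < m` is negative, so the sign `(-1)^j` is exactly compensated by the cube of a product
of `j` negative numbers, and the last factor is the square of a nonzero real.
-/

open Real

/-- `{n} = 2 sin(2πn/r)`. -/
noncomputable def qs (r n : ℕ) : ℝ := 2 * Real.sin (2 * π * n / r)

/-- `{n}! = ∏_{k=1}^{n} {k}`, with `{0}! = 1`. -/
noncomputable def qsf (r n : ℕ) : ℝ := ∏ k ∈ Finset.Icc 1 n, qs r k

/-- The `j`-th summand of Habiro's formula for the value at `t = e^{4πi/(2m+1)}` of the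
colored Jones polynomial of the Borromean rings with all components colored by `m`. -/
noncomputable def borSummand (m j : ℕ) : ℝ :=
  (-1:ℝ)^j * ((qs (2*m+1) m)^3 / qs (2*m+1) 1) *
    (∏ k ∈ Finset.Icc 1 j, qs (2*m+1) (m+k) * qs (2*m+1) (m-k))^3 *
    (qsf (2*m+1) j / qsf (2*m+1) (2*j+1))^2

lemma qs_pos {r n : ℕ} (hn : 0 < n) (hnr : 2 * n < r) : 0 < qs r n := by
  have hr : (0 : ℝ) < r := by exact_mod_cast hn.trans_le (by omega)
  have hnr' : (2 : ℝ) * n < r := by exact_mod_cast hnr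
  have hpos : 0 < 2 * π * n / r := by positivity
  have hlt : 2 * π * n / r < π := by
    rw [div_lt_iff₀ hr]
    nlinarith [pi_pos]
  unfold qs
  linarith [sin_pos_of_pos_of_lt_pi hpos hlt]

lemma qs_neg {r n : ℕ} (hrn : r < 2 * n) (hnr : n < r) : qs r n < 0 := by
  have hr : (0 : ℝ) < r := by exact_mod_cast (Nat.zero_le n).trans_lt hnr
  have hrn' : (r : ℝ) < 2 * n := by exact_mod_cast hrn
  have hnr' : (n : ℝ) < r := by exact_mod_cast hnr
  have hgt : π < 2 * π * n / r := by
    rw [lt_div_iff₀ hr]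
    nlinarith [pi_pos]
  have hlt : 2 * π * n / r < 2 * π := by
    rw [div_lt_iff₀ hr]
    nlinarith [pi_pos]
  have hsin := sin_pos_of_pos_of_lt_pi (x := 2 * π * n / r - π) (by linarith) (by linarith)
  rw [sin_sub_pi] at hsin
  unfold qs
  linarith

lemma qs_ne_zero {r n : ℕ} (hn : 0 < n) (hnr : n < r) (hr : 2 * n ≠ r) : qs r n ≠ 0 := by
  rcases hr.lt_or_gt with h | h
  · exact (qs_pos hn h).ne'
  · exact (qs_neg h hnr).ne

lemma qsf_ne_zero {r n : ℕ} (hr : Odd r) (hnr : n < r) : qsf r n ≠ 0 := by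
  obtain ⟨m, rfl⟩ := hr
  refine Finset.prod_ne_zero_iff.mpr fun k hk => ?_
  rw [Finset.mem_Icc] at hk
  exact qs_ne_zero hk.1 (by omega) (by omega)

lemma Finset.neg_one_pow_card_mul_prod_pos {ι R : Type*} [CommRing R] [PartialOrder R]
    [IsStrictOrderedRing R] {s : Finset ι} {f : ι → R} (hf : ∀ i ∈ s, f i < 0) :
    0 < (-1) ^ s.card * ∏ i ∈ s, f i := by
  rw [← Finset.prod_neg]
  exact Finset.prod_pos fun i hi => neg_pos.mpr (hf i hi)

lemma borSummand_pos {m j : ℕ} (hj : j < m) : 0 < borSummand m j := by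
  set P := ∏ k ∈ Finset.Icc 1 j, qs (2 * m + 1) (m + k) * qs (2 * m + 1) (m - k)
  have hlead : 0 < qs (2 * m + 1) m ^ 3 / qs (2 * m + 1) 1 :=
    div_pos (pow_pos (qs_pos (by omega) (by omega)) 3) (qs_pos one_pos (by omega))
  have hsignP : 0 < (-1) ^ j * P := by
    have hfactor : ∀ k ∈ Finset.Icc 1 j,
        qs (2 * m + 1) (m + k) * qs (2 * m + 1) (m - k) < 0 := by
      intro k hk
      rw [Finset.mem_Icc] at hk
      exact mul_neg_of_neg_of_pos (qs_neg (by omega) (by omega)) (qs_pos (by omega) (by omega))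
    simpa using Finset.neg_one_pow_card_mul_prod_pos hfactor
  have hratio : qsf (2 * m + 1) j / qsf (2 * m + 1) (2 * j + 1) ≠ 0 :=
    div_ne_zero (qsf_ne_zero (odd_two_mul_add_one m) (by omega))
      (qsf_ne_zero (odd_two_mul_add_one m) (by omega))
  have hcube : ((-1 : ℝ) ^ j) ^ 3 = (-1) ^ j := by
    rw [← pow_mul, mul_comm, pow_mul]
    norm_num
  have hrearrange : borSummand m j = qs (2 * m + 1) m ^ 3 / qs (2 * m + 1) 1 *
      ((-1) ^ j * P) ^ 3 * (qsf (2 * m + 1) j / qsf (2 * m + 1) (2 * j + 1)) ^ 2 := by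
    rw [borSummand, mul_pow, hcube]
    ring
  rw [hrearrange]
  exact mul_pos (mul_pos hlead (pow_pos hsignP 3)) (sq_pos_of_ne_zero hratio)

theorem stmt5_general (m : ℕ) :
    (∀ j ∈ Finset.range m, 0 < borSummand m j) ∧
      |∑ j ∈ Finset.range m, borSummand m j|
        = ∑ j ∈ Finset.range m, |borSummand m j| := by
  have hpos : ∀ j ∈ Finset.range m, 0 < borSummand m j := fun j hj =>
    borSummand_pos (Finset.mem_range.mp hj)
  refine ⟨hpos, ?_⟩
  rw [Finset.abs_sum_of_nonneg fun j hj => (hpos j hj).le]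
  exact Finset.sum_congr rfl fun j hj => (abs_of_pos (hpos j hj)).symm

/-- All summands of Habiro's formula for the Borromean rings colored by `m` are strictly
positive; in particular they have the same sign and the absolute value of the sum is the
sum of the absolute values. -/
theorem stmt5 (m : ℕ) (hm : 1 ≤ m) :
    (∀ j ∈ Finset.range m, 0 < borSummand m j) ∧
      |∑ j ∈ Finset.range m, borSummand m j|
        = ∑ j ∈ Finset.range m, |borSummand m j| :=
  stmt5_general m
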